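/- arXiv:1604.07139 — 3 statements merged into one kernel-verified Lean document; each statement's English description precedes it below -/
import Mathlib

section
/- Let n ≥ 1 and let p_i, q_i, r_i > 0 for i = 1,…,n. Define B : [0,1]^n → ℝ^n by B_i(α) = (p_i + 2 r_i (1 + S_i)) / (2[p_i + q_i + r_i + (q_i + r_i) S_i]) where S_i = Σ_{j≠i} α_j. Then B is continuous, maps [0,1]^n into [0,1]^n (indeed each coordinate lies in (0,1)), and has a fixed point α* ∈ [0,1]^n, i.e., α*_i = B_i(α*) for all i. Hence a Nash equilibrium of the static social trust game exists. -/
/-!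
At an equilibrium with total activity `T = Σ_j α_j`, player `i` faces `S_i = T - α_i`, so its
share `α_i` must solve `α_i = B_i(T - α_i)`. Writing `t = 1 + T - α_i`, this is a quadratic in `t`
with a unique positive root, which depends continuously on `T` and yields a share in `(0,1)`.
The equilibrium problem thus collapses to the one-dimensional fixed-point problem
`T = Σ_i α_i(T)` on `[0, n]`, solved by the intermediate value theorem.
-/

open Set

noncomputable def quadraticRoot (a b c : ℝ) : ℝ :=
  (-b + √(discrim a b c)) / (2 * a)

lemma quadraticRoot_isRoot {a b c : ℝ} (ha : a ≠ 0) (hd : 0 ≤ discrim a b c) :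
    a * (quadraticRoot a b c * quadraticRoot a b c) + b * quadraticRoot a b c + c = 0 :=
  (quadratic_eq_zero_iff ha (Real.mul_self_sqrt hd).symm _).2 (Or.inl rfl)

lemma discrim_pos_of_mul_neg {a b c : ℝ} (h : a * c < 0) : b ^ 2 < discrim a b c := by
  rw [discrim]
  linarith

lemma quadraticRoot_pos {a b c : ℝ} (ha : 0 < a) (hc : c < 0) : 0 < quadraticRoot a b c := by
  have hb : b < √(discrim a b c) :=
    calc b ≤ |b| := le_abs_self b
      _ = √(b ^ 2) := (Real.sqrt_sq_eq_abs b).symm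
      _ < √(discrim a b c) :=
        Real.sqrt_lt_sqrt (sq_nonneg b) (discrim_pos_of_mul_neg (mul_neg_of_pos_of_neg ha hc))
  exact div_pos (by linarith) (by linarith)

noncomputable def bestResponse (p q r s : ℝ) : ℝ :=
  (p + 2 * r * (1 + s)) / (2 * (p + q + r + (q + r) * s))

lemma bestResponse_denom_pos {p q r s : ℝ} (hp : 0 < p) (hq : 0 ≤ q) (hr : 0 ≤ r) (hs : -1 < s) :
    0 < 2 * (p + q + r + (q + r) * s) := by
  nlinarith

lemma bestResponse_mem_Ioo {p q r s : ℝ} (hp : 0 < p) (hq : 0 ≤ q) (hr : 0 ≤ r) (hs : -1 < s) :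
    bestResponse p q r s ∈ Ioo 0 1 := by
  have hden := bestResponse_denom_pos hp hq hr hs
  exact ⟨div_pos (by nlinarith) hden, (div_lt_one hden).2 (by nlinarith)⟩

lemma continuousOn_bestResponse {p q r : ℝ} (hp : 0 < p) (hq : 0 ≤ q) (hr : 0 ≤ r) :
    ContinuousOn (bestResponse p q r) (Ioi (-1)) :=
  ContinuousOn.div (by fun_prop) (by fun_prop) fun _ hs =>
    (bestResponse_denom_pos hp hq hr hs).ne'

/-- `t = 1 + S` for the share of a player facing total activity `T`: the positive root of
`2(q+r) t² + 2(p + r - (q+r)(1+T)) t - p(1+2T)`, obtained by clearing the denominator in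
`1 + T - t = bestResponse p q r (t - 1)`. -/
noncomputable def shareRoot (p q r T : ℝ) : ℝ :=
  quadraticRoot (2 * (q + r)) (2 * (p + r - (q + r) * (1 + T))) (-(p * (1 + 2 * T)))

noncomputable def share (p q r T : ℝ) : ℝ :=
  1 + T - shareRoot p q r T

lemma shareRoot_pos {p q r T : ℝ} (hp : 0 < p) (hqr : 0 < q + r) (hT : 0 ≤ T) :
    0 < shareRoot p q r T :=
  quadraticRoot_pos (by positivity) (by nlinarith)

lemma share_eq_bestResponse {p q r T : ℝ} (hp : 0 < p) (hq : 0 ≤ q) (hr : 0 ≤ r)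
    (hqr : 0 < q + r) (hT : 0 ≤ T) :
    share p q r T = bestResponse p q r (T - share p q r T) := by
  have ht := shareRoot_pos hp hqr hT
  have hd : 0 ≤ discrim (2 * (q + r)) (2 * (p + r - (q + r) * (1 + T))) (-(p * (1 + 2 * T))) :=
    (sq_nonneg _).trans
      (discrim_pos_of_mul_neg (mul_neg_of_pos_of_neg (by positivity) (by nlinarith))).le
  have hroot := quadraticRoot_isRoot (by positivity) hd
  have hden := bestResponse_denom_pos hp hq hr (s := shareRoot p q r T - 1) (by linarith)
  rw [bestResponse, show T - share p q r T = shareRoot p q r T - 1 by rw [share]; ring,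
    eq_div_iff hden.ne', share]
  rw [← shareRoot] at hroot
  linear_combination -hroot

lemma share_mem_Ioo {p q r T : ℝ} (hp : 0 < p) (hq : 0 ≤ q) (hr : 0 ≤ r)
    (hqr : 0 < q + r) (hT : 0 ≤ T) : share p q r T ∈ Ioo 0 1 := by
  rw [share_eq_bestResponse hp hq hr hqr hT]
  refine bestResponse_mem_Ioo hp hq hr ?_
  have := shareRoot_pos hp hqr hT
  rw [share]
  linarith

lemma continuous_share (p q r : ℝ) : Continuous (share p q r) := by
  unfold share shareRoot quadraticRoot discrim
  fun_prop

lemma exists_sum_share_eq {ι : Type*} [Fintype ι] {p q r : ι → ℝ} (hp : ∀ i, 0 < p i)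
    (hq : ∀ i, 0 ≤ q i) (hr : ∀ i, 0 ≤ r i) (hqr : ∀ i, 0 < q i + r i) :
    ∃ T, 0 ≤ T ∧ ∑ i, share (p i) (q i) (r i) T = T := by
  have hshare i T (hT : 0 ≤ T) := share_mem_Ioo (hp i) (hq i) (hr i) (hqr i) hT
  obtain ⟨T, hT, hfix⟩ := exists_mem_Icc_isFixedPt (f := fun T => ∑ i, share (p i) (q i) (r i) T)
    (continuous_finsetSum _ fun i _ => continuous_share _ _ _).continuousOn
    (Nat.cast_nonneg (Fintype.card ι))
    (Finset.sum_nonneg fun i _ => (hshare i 0 le_rfl).1.le)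
    ((Finset.sum_le_sum fun i _ => (hshare i _ (Nat.cast_nonneg _)).2.le).trans (by simp))
  exact ⟨T, hT.1, hfix⟩

theorem static_social_trust_game_nash_exists_general
    (n : ℕ) (p q r : Fin n → ℝ)
    (hp : ∀ i, 0 < p i) (hq : ∀ i, 0 < q i) (hr : ∀ i, 0 < r i) :
    let S : (Fin n → ℝ) → Fin n → ℝ := fun α i => ∑ j ∈ Finset.univ.erase i, α j
    let B : (Fin n → ℝ) → Fin n → ℝ := fun α i =>
      (p i + 2 * r i * (1 + S α i)) /
        (2 * (p i + q i + r i + (q i + r i) * S α i))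
    ContinuousOn B (Set.Icc (0 : Fin n → ℝ) 1) ∧
    (∀ α ∈ Set.Icc (0 : Fin n → ℝ) 1, ∀ i, B α i ∈ Set.Ioo (0 : ℝ) 1) ∧
    (∃ αstar ∈ Set.Icc (0 : Fin n → ℝ) 1, ∀ i, αstar i = B αstar i) := by
  intro S B
  have hq' i := (hq i).le
  have hr' i := (hr i).le
  have hqr i : 0 < q i + r i := add_pos (hq i) (hr i)
  have hS α (hα : α ∈ Icc (0 : Fin n → ℝ) 1) i : -1 < S α i :=
    (Finset.sum_nonneg fun j _ => hα.1 j).trans_lt' (by norm_num)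
  obtain ⟨T, hT, hsum⟩ := exists_sum_share_eq hp hq' hr' hqr
  let αstar i := share (p i) (q i) (r i) T
  have hαstar i : αstar i ∈ Ioo 0 1 := share_mem_Ioo (hp i) (hq' i) (hr' i) (hqr i) hT
  have hSstar i : S αstar i = T - αstar i := by
    change ∑ j ∈ Finset.univ.erase i, _ = _
    rw [Finset.sum_erase_eq_sub (Finset.mem_univ i), hsum]
  refine ⟨continuousOn_pi.2 fun i =>
      (continuousOn_bestResponse (hp i) (hq' i) (hr' i)).comp (by fun_prop) fun α hα => hS α hα i,
    fun α hα i => bestResponse_mem_Ioo (hp i) (hq' i) (hr' i) (hS α hα i),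
    αstar, ⟨fun i => (hαstar i).1.le, fun i => (hαstar i).2.le⟩, fun i => ?_⟩
  change αstar i = bestResponse (p i) (q i) (r i) (S αstar i)
  rw [hSstar]
  exact share_eq_bestResponse (hp i) (hq' i) (hr' i) (hqr i) hT

/-- Existence of a Nash equilibrium in the static social trust game: the
best-response map `B_i(α) = (p_i + 2r_i(1+S_i)) / (2[p_i+q_i+r_i+(q_i+r_i)S_i])`
with `S_i = Σ_{j≠i} α_j` is continuous on the cube `[0,1]ⁿ`, maps the cube
into itself (each coordinate lying in `(0,1)`), and has a fixed point in the
cube, i.e., a Nash equilibrium exists. -/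
theorem static_social_trust_game_nash_exists
    (n : ℕ) (hn : 1 ≤ n) (p q r : Fin n → ℝ)
    (hp : ∀ i, 0 < p i) (hq : ∀ i, 0 < q i) (hr : ∀ i, 0 < r i) :
    let S : (Fin n → ℝ) → Fin n → ℝ := fun α i => ∑ j ∈ Finset.univ.erase i, α j
    let B : (Fin n → ℝ) → Fin n → ℝ := fun α i =>
      (p i + 2 * r i * (1 + S α i)) /
        (2 * (p i + q i + r i + (q i + r i) * S α i))
    ContinuousOn B (Set.Icc (0 : Fin n → ℝ) 1) ∧
    (∀ α ∈ Set.Icc (0 : Fin n → ℝ) 1, ∀ i, B α i ∈ Set.Ioo (0 : ℝ) 1) ∧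
    (∃ αstar ∈ Set.Icc (0 : Fin n → ℝ) 1, ∀ i, αstar i = B αstar i) :=
  static_social_trust_game_nash_exists_general n p q r hp hq hr
end

section
/- Let p, q, r > 0, S ≥ 0, and let α, x ∈ ℝ satisfy the steady-state stationarity relation α = [p(1 − 2 S x − 2x) + 2r(1 + S)] / (2(q + r)(1 + S)) together with the steady-state condition x = α/(1 + S). Then α = (p + 2r(1 + S)) / (2[p + q + r + (q + r)S]); i.e., at the open-loop equilibrium in steady state, the dynamic best response of a malicious node coincides with its static best response. -/
/-! At a steady state the competitors' outflow `(1 + S) x` equals the inflow `α`, so the term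
`2 S x + 2 x` in the stationarity condition is `2 α`. The condition thus becomes the linear
equation `2 (q + r)(1 + S) α = p + 2 r (1 + S) - 2 p α`, whose solution is the static best
response. -/

theorem eq_div_add_of_eq_sub_mul_div {K : Type*} [Field K] {a b c d : K} (hd : d ≠ 0)
    (hcd : c + d ≠ 0) (h : a = (b - c * a) / d) : a = b / (c + d) := by
  rw [eq_div_iff hd] at h
  rw [eq_div_iff hcd]
  linear_combination h

theorem mul_add_self_eq_of_eq_div {K : Type*} [Field K] {a s x : K} (hs : 1 + s ≠ 0)
    (h : x = a / (1 + s)) : s * x + x = a := by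
  rw [h]
  field_simp
  ring

/-- Dynamic multiple-malicious-node game at steady state: if
`α = [p(1 − 2Sx − 2x) + 2r(1+S)] / (2(q+r)(1+S))` (Pontryagin stationarity)
and `x = α/(1+S)` (steady state), then
`α = (p + 2r(1+S)) / (2[p + q + r + (q+r)S])`, i.e., the dynamic open-loop
equilibrium best response coincides with the static best response. -/
theorem multi_node_dynamic_steady_state_coincides_static
    (p q r S α x : ℝ) (hp : 0 < p) (hq : 0 < q) (hr : 0 < r) (hS : 0 ≤ S)
    (hstat : α = (p * (1 - 2 * S * x - 2 * x) + 2 * r * (1 + S)) /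
      (2 * (q + r) * (1 + S)))
    (hsteady : x = α / (1 + S)) :
    α = (p + 2 * r * (1 + S)) / (2 * (p + q + r + (q + r) * S)) := by
  have hS₁ : 0 < 1 + S := by linarith
  have hflow : S * x + x = α := mul_add_self_eq_of_eq_div hS₁.ne' hsteady
  have hlin : α = (p + 2 * r * (1 + S) - 2 * p * α) / (2 * (q + r) * (1 + S)) := by
    rw [← hflow] at hstat ⊢
    linear_combination hstat
  have hsol := eq_div_add_of_eq_sub_mul_div (by positivity) (by positivity) hlin
  rw [hsol]
  congr 1
  ring
end

section
/- Let p, q, r > 0. There exists a unique α ∈ (0,1) satisfying the symmetric equilibrium equation α = (p + 2r(1 + α)) / (2[p + q + r + (q + r)α]); equivalently, the quadratic 2(q + r)α² + 2(p + q)α − (p + 2r) has a unique root in (0,1). Hence the static social trust game between two symmetric malicious nodes has a unique symmetric Nash equilibrium, which is interior. -/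
/-! The fixed-point equation `α = B(α)` of the best response `B` clears to `Q(α) = 0` for
the quadratic `Q(α) = 2(q+r)α² + 2(p+q)α − (p+2r)`, because the denominator of `B` is
positive for `α ≥ 0`. On `[0, 1]` the quadratic is strictly increasing, with `Q(0) = −(p+2r) < 0` and
`Q(1) = p + 4q > 0`, so it has exactly one zero in `(0, 1)` by the intermediate value
theorem. -/

open Set

theorem existsUnique_mem_Ioo_eq_of_strictMonoOn
    {α δ : Type*} [ConditionallyCompleteLinearOrder α] [TopologicalSpace α] [OrderTopology α]
    [DenselyOrdered α] [LinearOrder δ] [TopologicalSpace δ] [OrderClosedTopology δ]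
    {f : α → δ} {a b : α} {c : δ} (hab : a ≤ b) (hf : ContinuousOn f (Icc a b))
    (hmono : StrictMonoOn f (Icc a b)) (ha : f a < c) (hb : c < f b) :
    ∃! x, x ∈ Ioo a b ∧ f x = c := by
  obtain ⟨x, hx, hfx⟩ := intermediate_value_Ioo hab hf ⟨ha, hb⟩
  refine ⟨x, ⟨hx, hfx⟩, fun y ⟨hy, hfy⟩ => ?_⟩
  exact hmono.injOn (Ioo_subset_Icc_self hy) (Ioo_subset_Icc_self hx) (hfy.trans hfx.symm)

namespace SocialTrust

variable (p q r : ℝ)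

noncomputable def bestResponse (s : ℝ) : ℝ :=
  (p + 2 * r * (1 + s)) / (2 * (p + q + r + (q + r) * s))

def equilibriumQuadratic (α : ℝ) : ℝ :=
  2 * (q + r) * α ^ 2 + 2 * (p + q) * α - (p + 2 * r)

variable {p q r}

theorem eq_bestResponse_iff {α : ℝ} (hden : 0 < p + q + r + (q + r) * α) :
    α = bestResponse p q r α ↔ equilibriumQuadratic p q r α = 0 := by
  rw [bestResponse, equilibriumQuadratic, eq_div_iff (by positivity)]
  constructor <;> intro h <;> linarith

theorem continuous_equilibriumQuadratic : Continuous (equilibriumQuadratic p q r) := by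
  unfold equilibriumQuadratic
  fun_prop

theorem strictMonoOn_equilibriumQuadratic (hqr : 0 ≤ q + r) (hpq : 0 < p + q) :
    StrictMonoOn (equilibriumQuadratic p q r) (Ici 0) := by
  intro x (hx : 0 ≤ x) y (hy : 0 ≤ y) hxy
  have hfactor : equilibriumQuadratic p q r y - equilibriumQuadratic p q r x
      = (y - x) * (2 * (q + r) * (x + y) + 2 * (p + q)) := by
    unfold equilibriumQuadratic
    ring
  have hpos : 0 < (y - x) * (2 * (q + r) * (x + y) + 2 * (p + q)) :=
    mul_pos (sub_pos.2 hxy) (by positivity)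
  linarith

theorem existsUnique_equilibriumQuadratic_eq_zero (hp : 0 < p) (hq : 0 < q) (hr : 0 < r) :
    ∃! α, α ∈ Ioo (0 : ℝ) 1 ∧ equilibriumQuadratic p q r α = 0 :=
  existsUnique_mem_Ioo_eq_of_strictMonoOn zero_le_one
    continuous_equilibriumQuadratic.continuousOn
    ((strictMonoOn_equilibriumQuadratic (by positivity) (by positivity)).mono Icc_subset_Ici_self)
    (by simp only [equilibriumQuadratic]; linarith)
    (by simp only [equilibriumQuadratic]; linarith)

end SocialTrust

open SocialTrust in
/-- The static social trust game between two symmetric malicious nodes has a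
unique symmetric Nash equilibrium, which is interior: there is a unique
`α ∈ (0,1)` with `α = (p + 2r(1+α)) / (2[p + q + r + (q+r)α])`; equivalently,
the quadratic `2(q+r)α² + 2(p+q)α − (p+2r)` has a unique root in `(0,1)`. -/
theorem symmetric_two_player_unique_equilibrium
    (p q r : ℝ) (hp : 0 < p) (hq : 0 < q) (hr : 0 < r) :
    (∃! α : ℝ, α ∈ Set.Ioo (0 : ℝ) 1 ∧
      α = (p + 2 * r * (1 + α)) / (2 * (p + q + r + (q + r) * α))) ∧
    (∃! α : ℝ, α ∈ Set.Ioo (0 : ℝ) 1 ∧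
      2 * (q + r) * α ^ 2 + 2 * (p + q) * α - (p + 2 * r) = 0) := by
  have hquad := existsUnique_equilibriumQuadratic_eq_zero hp hq hr
  refine ⟨(existsUnique_congr fun α => and_congr_right fun hmem => ?_).2 hquad, hquad⟩
  have hα : 0 < α := hmem.1
  exact eq_bestResponse_iff (by positivity)
end
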